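/- Let α generate a real quadratic field K with discriminant D and suppose H(α) ≤ 0.48·√D. Then one of the four elements α, α', −α, −α' is reduced, where α' is the Galois conjugate of α. Moreover the quadratic polynomial ax² + bx + c of such an α satisfies b² − 4ac = D (i.e. the conductor m with b² − 4ac = m²D equals 1). -/

import Mathlib

/-!
Let `x = σ α` and `y = τ α` be the two real conjugates. The pair `(1, aα)` lies in `𝓞 K`, and its
discriminant is `a²(x - y)² = b² - 4ac`; comparing with an integral basis gives
`b² - 4ac = d² D` for an integer `d`. The height bound makes `b² - 4ac ≤ 5 H² < 2 D`, so `d² = 1`,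
and then `-4ac = D - b² > 0`. Finally `x y = c / a < 0`, and `|a| |x - y| = √D`,
`|a| |x y| = |c|` give `|x - y| ≥ 1 / 0.48` and `|x y| ≤ 0.48 |x - y|`: one root lies in `(-1, 1)`
and the other, of opposite sign, outside `[-1, 1]`.
-/

open NumberField IntermediateField

/-- `x` and `y` are the images of a real quadratic number and of its Galois conjugate. -/
def IsReducedPair (x y : ℝ) : Prop := 1 < x ∧ -1 < y ∧ y < 0

theorem vieta_of_two_roots {R : Type*} [CommRing R] [IsDomain R] {a b c x y : R}
    (hx : a * x ^ 2 + b * x + c = 0) (hy : a * y ^ 2 + b * y + c = 0) (hxy : x ≠ y) :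
    a * (x + y) = -b ∧ a * (x * y) = c := by
  have hsum : a * (x + y) = -b := by
    have : (x - y) * (a * (x + y) + b) = 0 := by linear_combination hx - hy
    rw [mul_eq_zero, sub_eq_zero, add_eq_zero_iff_eq_neg] at this
    exact this.resolve_left hxy
  exact ⟨hsum, by linear_combination x * hsum - hx⟩

open Polynomial in
theorem isIntegral_leadingCoeff_mul_of_quadratic {K : Type*} [CommRing K] {a b c : ℤ} {α : K}
    (hα : (a : K) * α ^ 2 + b * α + c = 0) : IsIntegral ℤ ((a : K) * α) := by
  refine ⟨X ^ 2 + (C b * X + C (a * c)), monic_X_pow_add (by compute_degree!), ?_⟩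
  simp only [eval₂_add, eval₂_mul, eval₂_X, eval₂_X_pow, eval₂_C]
  simp only [eq_intCast, Int.cast_mul]
  linear_combination (a : K) * hα

theorem RingHom.apply_ne_apply_of_adjoin_eq_top {K L : Type*} [Field K] [CharZero K]
    [Algebra.IsAlgebraic ℚ K] [Field L] [CharZero L] {σ τ : K →+* L} (hστ : σ ≠ τ) {α : K} (hα : ℚ⟮α⟯ = ⊤) :
    σ α ≠ τ α := by
  intro h
  have := AlgHom.ext_of_adjoin_eq_top
    (Algebra.adjoin_eq_top_of_primitive_element (Algebra.IsAlgebraic.isAlgebraic α) hα)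
    (φ₁ := σ.toRatAlgHom) (φ₂ := τ.toRatAlgHom) (by simpa using h)
  exact hστ (RingHom.ext fun z => DFunLike.congr_fun this z)

theorem Algebra.coe_discr_int {K ι : Type*} [Field K] [NumberField K] [Fintype ι] [DecidableEq ι]
    (v : ι → 𝓞 K) : (Algebra.discr ℤ v : ℚ) = Algebra.discr ℚ (fun i => (v i : K)) := by
  rw [Algebra.discr_def, Algebra.discr_def, ← eq_intCast (Int.castRingHom ℚ), RingHom.map_det]
  congr 1
  ext i j
  simp [Algebra.traceMatrix_apply, Algebra.coe_trace_int]

open Matrix in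
theorem NumberField.discr_eq_det_sq_mul_discr {K ι : Type*} [Field K] [NumberField K] [Fintype ι]
    [DecidableEq ι] (B : Module.Basis ι ℤ (𝓞 K)) (v : ι → 𝓞 K) :
    Algebra.discr ℤ v = (B.toMatrix v).det ^ 2 * discr K := by
  calc Algebra.discr ℤ v
      = Algebra.discr ℤ (B ᵥ* (B.toMatrix v).map (algebraMap ℤ (𝓞 K))) := by
        rw [B.toMatrix_map_vecMul]
    _ = _ := by rw [Algebra.discr_of_matrix_vecMul, discr_eq_discr]

theorem Algebra.discr_pair_eq_of_real_embeddings {K : Type*} [Field K] [NumberField K]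
    (hK : Module.finrank ℚ K = 2) {σ τ : K →+* ℝ} (hστ : σ ≠ τ) (x y : K) :
    (Algebra.discr ℚ ![x, y] : ℝ) = (σ x * τ y - τ x * σ y) ^ 2 := by
  let φ : K →ₐ[ℚ] ℂ := (Complex.ofRealHom.comp σ).toRatAlgHom
  let ψ : K →ₐ[ℚ] ℂ := (Complex.ofRealHom.comp τ).toRatAlgHom
  have hφψ : φ ≠ ψ := fun h =>
    hστ (RingHom.ext fun z => Complex.ofReal_injective (DFunLike.congr_fun h z))
  let e : Fin 2 ≃ (K →ₐ[ℚ] ℂ) := Equiv.ofBijective ![φ, ψ]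
    ((Fintype.bijective_iff_injective_and_card _).2
      ⟨injective_pair_iff_ne.2 hφψ, by simp [AlgHom.card, hK]⟩)
  have := Algebra.discr_eq_det_embeddingsMatrixReindex_pow_two ℚ ℂ ![x, y] e
  rw [Matrix.det_fin_two, eq_ratCast] at this
  apply Complex.ofReal_injective
  simpa [Algebra.embeddingsMatrixReindex, Algebra.embeddingsMatrix, e, φ, ψ] using this

theorem exists_int_sq_mul_discr_eq_of_quadratic_root {K : Type*} [Field K] [NumberField K]
    (hK : Module.finrank ℚ K = 2) {σ τ : K →+* ℝ} (hστ : σ ≠ τ) {a b c : ℤ} {α : K}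
    (hα : (a : K) * α ^ 2 + b * α + c = 0) :
    ∃ d : ℤ, ((d ^ 2 * discr K : ℤ) : ℝ) = a ^ 2 * (σ α - τ α) ^ 2 := by
  let θ : 𝓞 K := ⟨a * α, isIntegral_leadingCoeff_mul_of_quadratic hα⟩
  let B : Module.Basis (Fin 2) ℤ (𝓞 K) := (RingOfIntegers.basis K).reindex
    (Fintype.equivFinOfCardEq (by
      rw [← Module.finrank_eq_card_chooseBasisIndex, RingOfIntegers.rank, hK]))
  refine ⟨(B.toMatrix ![1, θ]).det, ?_⟩
  have hcoe : (fun i => ((![1, θ] i : 𝓞 K) : K)) = ![1, (a : K) * α] := by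
    ext i; fin_cases i <;> rfl
  rw [← NumberField.discr_eq_det_sq_mul_discr B, ← Rat.cast_intCast, Algebra.coe_discr_int, hcoe,
    Algebra.discr_pair_eq_of_real_embeddings hK hστ]
  simp only [map_one, map_mul, map_intCast]
  ring

theorem quadratic_discr_eq_and_mul_neg_of_abs_le {a b c d D : ℤ} {h : ℝ} (hh : h < 1 / 2)
    (hΔ : b ^ 2 - 4 * a * c = d ^ 2 * D) (hpos : 0 < b ^ 2 - 4 * a * c)
    (ha : |(a : ℝ)| ≤ h * √D) (hb : |(b : ℝ)| ≤ h * √D) (hc : |(c : ℝ)| ≤ h * √D) :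
    b ^ 2 - 4 * a * c = D ∧ a * c < 0 := by
  have hD : 0 < D := pos_of_mul_pos_right (hΔ ▸ hpos) (sq_nonneg d)
  have hDR : (0 : ℝ) < D := by exact_mod_cast hD
  have hS : 0 < √(D : ℝ) := Real.sqrt_pos.2 hDR
  have hS2 : √(D : ℝ) ^ 2 = D := Real.sq_sqrt hDR.le
  have hh0 : 0 ≤ h := nonneg_of_mul_nonneg_left ((abs_nonneg _).trans ha) hS
  have hhD : h ^ 2 * D < D / 4 := by
    have : h ^ 2 < 1 / 4 := by nlinarith
    nlinarith
  have hb2 : (b : ℝ) ^ 2 ≤ h ^ 2 * D := by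
    rw [← sq_abs, ← hS2, ← mul_pow]; gcongr
  have hac : |(a : ℝ) * c| ≤ h ^ 2 * D := by
    rw [abs_mul, ← hS2, sq, sq, mul_mul_mul_comm]; gcongr
  have hd : d ^ 2 = 1 := by
    have hlt : ((d ^ 2 * D : ℤ) : ℝ) < 2 * D := by
      rw [← hΔ]; push_cast; linarith [neg_abs_le ((a : ℝ) * c)]
    push_cast at hlt
    have : d ^ 2 < 2 := by exact_mod_cast lt_of_mul_lt_mul_right hlt hDR.le
    have : 0 < d ^ 2 := pos_of_mul_pos_left (hΔ ▸ hpos) hD.le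
    omega
  rw [hd, one_mul] at hΔ
  refine ⟨hΔ, ?_⟩
  have : (4 * (a * c) : ℝ) = b ^ 2 - D := by rw [← hΔ]; push_cast; ring
  exact_mod_cast (by linarith : (a * c : ℝ) < 0)

theorem isReducedPair_or_of_mul_le {h x y : ℝ} (hh : h < 1 / 2) (hx : 0 < x) (hy : y < 0)
    (hsep : 1 ≤ h * (x - y)) (hprod : x * -y ≤ h * (x - y)) :
    IsReducedPair x y ∨ IsReducedPair (-y) (-x) := by
  have h0 : 0 < h := by nlinarith
  -- If `-y ≤ 2h` then `x ≥ 1/h - 2h > 1`; otherwise `x (-y - h) ≤ h (-y)` forces `x < 2h < 1`.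
  rcases le_or_gt (-y) (2 * h) with hy' | hy'
  · left
    refine ⟨?_, by linarith, hy⟩
    nlinarith
  · right
    have hx' : x < 2 * h := by nlinarith
    refine ⟨?_, by linarith, by linarith⟩
    nlinarith

theorem isReducedPair_or_of_abs_le {h x y A C S : ℝ} (hh : h < 1 / 2) (hS : 0 ≤ S)
    (hA : |A| ≤ h * S) (hC : |C| ≤ h * S)
    (hprod : A * (x * y) = C) (hsep : A ^ 2 * (x - y) ^ 2 = S ^ 2) (hAC : A * C < 0) :
    IsReducedPair x y ∨ IsReducedPair y x ∨
      IsReducedPair (-x) (-y) ∨ IsReducedPair (-y) (-x) := by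
  have hxy : x * y < 0 := by
    have : A * C = A ^ 2 * (x * y) := by rw [← hprod]; ring
    nlinarith [sq_nonneg A]
  have hA0 : 0 < |A| := abs_pos.2 (by rintro rfl; simp at hAC)
  have hdist : |A| * |x - y| = S := by
    rw [← abs_mul, ← abs_of_nonneg hS, ← sq_eq_sq_iff_abs_eq_abs, mul_pow, hsep]
  have hsep' : 1 ≤ h * |x - y| := le_of_mul_le_mul_left (by nlinarith) hA0
  have hprod' : |x * y| ≤ h * |x - y| :=
    le_of_mul_le_mul_left (by rw [← abs_mul, hprod]; nlinarith) hA0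
  rcases mul_neg_iff.1 hxy with ⟨hx, hy⟩ | ⟨hx, hy⟩
  · rw [abs_of_pos (by linarith : 0 < x - y)] at hsep'
    rw [abs_of_neg hxy, abs_of_pos (by linarith : 0 < x - y), ← mul_neg] at hprod'
    rcases isReducedPair_or_of_mul_le hh hx hy hsep' hprod' with h | h <;> simp [h]
  · rw [abs_sub_comm, abs_of_pos (by linarith : 0 < y - x)] at hsep'
    rw [abs_of_neg hxy, abs_sub_comm, abs_of_pos (by linarith : 0 < y - x), ← neg_mul,
      mul_comm] at hprod'
    rcases isReducedPair_or_of_mul_le hh hy hx hsep' hprod' with h | h <;> simp [h]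

theorem small_generator_real_quadratic_is_reduced
    (K : Type*) [Field K] [NumberField K]
    (hdeg : Module.finrank ℚ K = 2)
    (σ τ : K →+* ℝ) (hστ : σ ≠ τ)
    (α : K) (hgen : ℚ⟮α⟯ = ⊤)
    (a b c : ℤ)
    (hroot : (a : K) * α ^ 2 + (b : K) * α + (c : K) = 0)
    (hgcd : Int.gcd (Int.gcd a b) c = 1)
    (hsmall : ((max |a| (max |b| |c|) : ℤ) : ℝ) ≤
      0.48 * Real.sqrt (NumberField.discr K : ℝ)) :
    b ^ 2 - 4 * a * c = NumberField.discr K ∧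
    (IsReducedPair (σ α) (τ α) ∨ IsReducedPair (τ α) (σ α) ∨
     IsReducedPair (-σ α) (-τ α) ∨ IsReducedPair (-τ α) (-σ α)) := by
  have hne : σ α ≠ τ α := RingHom.apply_ne_apply_of_adjoin_eq_top hστ hgen
  have hroot' (φ : K →+* ℝ) : (a : ℝ) * φ α ^ 2 + b * φ α + c = 0 := by
    simpa using congrArg φ hroot
  obtain ⟨hsum, hprod⟩ := vieta_of_two_roots (hroot' σ) (hroot' τ) hne
  have ha0 : a ≠ 0 := by
    rintro rfl
    simp only [Int.cast_zero, zero_mul, neg_eq_zero, Int.cast_eq_zero, eq_comm (a := (0 : ℝ))]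
      at hsum hprod
    simp [hsum, hprod] at hgcd
  have hΔ : ((b ^ 2 - 4 * a * c : ℤ) : ℝ) = a ^ 2 * (σ α - τ α) ^ 2 := by
    push_cast; linear_combination (b - a * (σ α + τ α)) * hsum + 4 * a * hprod
  have hpos : 0 < b ^ 2 - 4 * a * c := by
    have := sub_ne_zero.2 hne
    have : (0 : ℝ) < a ^ 2 * (σ α - τ α) ^ 2 := by positivity
    exact_mod_cast hΔ ▸ this
  obtain ⟨d, hd⟩ := exists_int_sq_mul_discr_eq_of_quadratic_root hdeg hστ hroot
  have hdisc : b ^ 2 - 4 * a * c = d ^ 2 * discr K := by exact_mod_cast (hd.trans hΔ.symm).symm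
  obtain ⟨ha, hb, hc⟩ : |(a : ℝ)| ≤ 0.48 * √(discr K : ℝ) ∧ |(b : ℝ)| ≤ 0.48 * √(discr K : ℝ) ∧
      |(c : ℝ)| ≤ 0.48 * √(discr K : ℝ) := by
    simpa only [Int.cast_max, Int.cast_abs, max_le_iff] using hsmall
  obtain ⟨hdiscr, hac⟩ := quadratic_discr_eq_and_mul_neg_of_abs_le (by norm_num) hdisc hpos ha hb hc
  refine ⟨hdiscr, isReducedPair_or_of_abs_le (by norm_num) (Real.sqrt_nonneg _) ha hc hprod ?_
    (by exact_mod_cast hac)⟩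
  rw [Real.sq_sqrt (by exact_mod_cast (hdiscr ▸ hpos).le), ← hΔ, hdiscr]
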